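/- A social ranking solution R satisfies neutrality (NT), weak coalitional anonymity (WCA), the weak union very important person property (WUVIP), top-aligned consistency (TCON), and tops-only (TO) if and only if R equals the plurality solution R^P. -/

import Mathlib

namespace SocRank

/-- A coalitional ranking (a weak order on a set of feasible nonempty coalitions),
represented by its list of equivalence classes, listed from best to worst. -/
structure CoalRanking (X : Type*) where
  classes : List (Finset (Finset X))
  class_nonempty : ∀ C ∈ classes, C.Nonempty
  coal_nonempty : ∀ C ∈ classes, ∀ S ∈ C, S.Nonempty
  classes_disjoint : classes.Pairwise Disjoint

namespace CoalRanking

variable {X : Type*}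

/-- The coalition domain `𝒟(≿)` of a coalitional ranking. -/
def domain [DecidableEq X] (r : CoalRanking X) : Finset (Finset X) :=
  r.classes.foldr (· ∪ ·) ∅

/-- The list of equivalence classes of the restriction of a ranking to a set `D`
of coalitions. -/
def restrictClasses [DecidableEq X] (r : CoalRanking X) (D : Finset (Finset X)) :
    List (Finset (Finset X)) :=
  (r.classes.map (· ∩ D)).filter (fun C => decide C.Nonempty)

/-- Merging two lists of equivalence classes by aligning them at the top. -/
def zipUnion [DecidableEq X] :
    List (Finset (Finset X)) → List (Finset (Finset X)) → List (Finset (Finset X))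
  | [], M => M
  | L, [] => L
  | A :: L, B :: M => (A ∪ B) :: zipUnion L M

/-- `r` is a sum of the disjoint rankings `r₁` and `r₂`: its domain is the union of
the two domains and its restriction to the domain of `rᵢ` is `rᵢ`. -/
def IsSum [DecidableEq X] (r r₁ r₂ : CoalRanking X) : Prop :=
  Disjoint r₁.domain r₂.domain ∧
  r.domain = r₁.domain ∪ r₂.domain ∧
  r.restrictClasses r₁.domain = r₁.classes ∧
  r.restrictClasses r₂.domain = r₂.classes

/-- `r` is the concatenation sum `r₁ · r₂` of the disjoint rankings `r₁` and `r₂`. -/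
def IsConcatSum [DecidableEq X] (r r₁ r₂ : CoalRanking X) : Prop :=
  Disjoint r₁.domain r₂.domain ∧ r.classes = r₁.classes ++ r₂.classes

/-- `r` is the top-aligned sum `r₁ ⊨ r₂` of the disjoint rankings `r₁` and `r₂`. -/
def IsTopAlignedSum [DecidableEq X] (r r₁ r₂ : CoalRanking X) : Prop :=
  Disjoint r₁.domain r₂.domain ∧ r.classes = zipUnion r₁.classes r₂.classes

/-- `r` is the bottom-aligned sum `r₁ ⫤ r₂` of the disjoint rankings `r₁` and `r₂`. -/
def IsBottomAlignedSum [DecidableEq X] (r r₁ r₂ : CoalRanking X) : Prop :=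
  Disjoint r₁.domain r₂.domain ∧
  r.classes = (zipUnion r₁.classes.reverse r₂.classes.reverse).reverse

/-- Renaming the individuals of a coalitional ranking by a permutation `σ` of `X`:
the ranking `≿^σ`. -/
def mapPerm [DecidableEq X] (σ : Equiv.Perm X) (r : CoalRanking X) : CoalRanking X where
  classes := r.classes.map (fun C => C.image (fun S => S.image σ))
  class_nonempty := by
    intro C hC
    simp only [List.mem_map] at hC
    obtain ⟨C₀, hC₀, rfl⟩ := hC
    exact (r.class_nonempty C₀ hC₀).image _
  coal_nonempty := by
    intro C hC S hS
    simp only [List.mem_map] at hC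
    obtain ⟨C₀, hC₀, rfl⟩ := hC
    simp only [Finset.mem_image] at hS
    obtain ⟨S₀, hS₀, rfl⟩ := hS
    exact (r.coal_nonempty C₀ hC₀ S₀ hS₀).image _
  classes_disjoint := by
    refine List.Pairwise.map _ (fun {A B} h => ?_) r.classes_disjoint
    exact (Finset.disjoint_image
      (Finset.image_injective σ.injective)).mpr h

/-- Renaming the coalitions of a coalitional ranking by a permutation `π` of the set of
coalitions (mapping nonempty sets to nonempty sets): the ranking `≿_π`. -/
def mapCoalPerm [DecidableEq X] (π : Equiv.Perm (Finset X))
    (hπ : ∀ S : Finset X, S.Nonempty → (π S).Nonempty) (r : CoalRanking X) :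
    CoalRanking X where
  classes := r.classes.map (fun C => C.image π)
  class_nonempty := by
    intro C hC
    simp only [List.mem_map] at hC
    obtain ⟨C₀, hC₀, rfl⟩ := hC
    exact (r.class_nonempty C₀ hC₀).image _
  coal_nonempty := by
    intro C hC S hS
    simp only [List.mem_map] at hC
    obtain ⟨C₀, hC₀, rfl⟩ := hC
    simp only [Finset.mem_image] at hS
    obtain ⟨S₀, hS₀, rfl⟩ := hS
    exact hπ S₀ (r.coal_nonempty C₀ hC₀ S₀ hS₀)
  classes_disjoint := by
    refine List.Pairwise.map _ (fun {A B} h => ?_) r.classes_disjoint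
    exact (Finset.disjoint_image π.injective).mpr h

end CoalRanking

open CoalRanking

variable {X : Type*}

/-- A social ranking solution: a map assigning to every coalitional ranking a binary
relation on the individuals. -/
abbrev SRSMap (X : Type*) := CoalRanking X → X → X → Prop

/-- The symmetric part `I` of the social ranking. -/
def Ind (R : SRSMap X) (r : CoalRanking X) (x y : X) : Prop := R r x y ∧ R r y x

/-- The asymmetric part `P` of the social ranking. -/
def Pref (R : SRSMap X) (r : CoalRanking X) (x y : X) : Prop := R r x y ∧ ¬ R r y x

/-- Conditions (1)-(4) of consistency for the triple `(r₁, r₂, r)`. -/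
def ConsistentAt (R : SRSMap X) (r₁ r₂ r : CoalRanking X) : Prop :=
  ∀ x y : X,
    (Ind R r₁ x y → Ind R r₂ x y → Ind R r x y) ∧
    (Ind R r₁ x y → Pref R r₂ x y → Pref R r x y) ∧
    (Pref R r₁ x y → Ind R r₂ x y → Pref R r x y) ∧
    (Pref R r₁ x y → Pref R r₂ x y → Pref R r x y)

/-- Consistency (CON). -/
def CON [DecidableEq X] (R : SRSMap X) : Prop :=
  ∀ r₁ r₂ r : CoalRanking X, IsSum r r₁ r₂ → ConsistentAt R r₁ r₂ r

/-- Concatenation consistency (CCON). -/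
def CCON [DecidableEq X] (R : SRSMap X) : Prop :=
  ∀ r₁ r₂ r : CoalRanking X, IsConcatSum r r₁ r₂ → ConsistentAt R r₁ r₂ r

/-- Top-aligned consistency (TCON). -/
def TCON [DecidableEq X] (R : SRSMap X) : Prop :=
  ∀ r₁ r₂ r : CoalRanking X, IsTopAlignedSum r r₁ r₂ → ConsistentAt R r₁ r₂ r

/-- Bottom-aligned consistency (BCON). -/
def BCON [DecidableEq X] (R : SRSMap X) : Prop :=
  ∀ r₁ r₂ r : CoalRanking X, IsBottomAlignedSum r r₁ r₂ → ConsistentAt R r₁ r₂ r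

/-- II-concatenation consistency. -/
def IICCON [DecidableEq X] (R : SRSMap X) : Prop :=
  ∀ r₁ r₂ r : CoalRanking X, IsConcatSum r r₁ r₂ →
    ∀ x y : X, Ind R r₁ x y → Ind R r₂ x y → Ind R r x y

/-- IP-concatenation consistency. -/
def IPCCON [DecidableEq X] (R : SRSMap X) : Prop :=
  ∀ r₁ r₂ r : CoalRanking X, IsConcatSum r r₁ r₂ →
    ∀ x y : X, Ind R r₁ x y → Pref R r₂ x y → Pref R r x y

/-- PI-concatenation consistency. -/
def PICCON [DecidableEq X] (R : SRSMap X) : Prop :=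
  ∀ r₁ r₂ r : CoalRanking X, IsConcatSum r r₁ r₂ →
    ∀ x y : X, Pref R r₁ x y → Ind R r₂ x y → Pref R r x y

/-- PP-concatenation consistency. -/
def PPCCON [DecidableEq X] (R : SRSMap X) : Prop :=
  ∀ r₁ r₂ r : CoalRanking X, IsConcatSum r r₁ r₂ →
    ∀ x y : X, Pref R r₁ x y → Pref R r₂ x y → Pref R r x y

/-- `x_k`: the number of coalitions of the class `C` containing `x`. -/
def cnt [DecidableEq X] (x : X) (C : Finset (Finset X)) : ℕ :=
  (C.filter (fun S => x ∈ S)).card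

/-- The vector `θ_≿(x) = (x₁, …, x_l)`. -/
def theta [DecidableEq X] (r : CoalRanking X) (x : X) : List ℕ :=
  r.classes.map (cnt x)

/-- `sign`: `1` on positive numbers, `0` otherwise. -/
def sgn (n : ℕ) : ℕ := if 0 < n then 1 else 0

/-- The vector `θ̇_≿(x) = (sign(x₁), …, sign(x_l))`. -/
def thetaDot [DecidableEq X] (r : CoalRanking X) (x : X) : List ℕ :=
  (theta r x).map sgn

/-- The lexicographic order `≥^L` on vectors (of equal length). -/
def lexGE : List ℕ → List ℕ → Prop
  | _, [] => True
  | [], _ :: _ => False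
  | a :: as, b :: bs => b < a ∨ (a = b ∧ lexGE as bs)

/-- The lexicographic excellence solution (lex-cel) `R^L`. -/
def lexcel [DecidableEq X] : SRSMap X := fun r x y => lexGE (theta r x) (theta r y)

/-- The sign lexicographic excellence solution (S lex-cel) `R^{SL}`. -/
def slexcel [DecidableEq X] : SRSMap X := fun r x y => lexGE (thetaDot r x) (thetaDot r y)

/-- The plurality solution `R^P`. -/
def plurality [DecidableEq X] : SRSMap X := fun r x y =>
  (theta r y).headD 0 ≤ (theta r x).headD 0

/-- The sign plurality solution `R^{SP}`. -/
def splurality [DecidableEq X] : SRSMap X := fun r x y =>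
  sgn ((theta r y).headD 0) ≤ sgn ((theta r x).headD 0)

/-- The anti-plurality solution `R^{AP}`. -/
def antiplurality [DecidableEq X] : SRSMap X := fun r x y =>
  (theta r x).getLastD 0 ≤ (theta r y).getLastD 0

/-- `e_≿(x)`: the largest `k` such that `x` belongs to every coalition of each of the
first `k` equivalence classes. -/
def eIIS [DecidableEq X] (r : CoalRanking X) (x : X) : ℕ :=
  (r.classes.takeWhile (fun C => decide (∀ S ∈ C, x ∈ S))).length

/-- The intersection initial segment solution (IIS) `R^{IIS}`. -/
def iis [DecidableEq X] : SRSMap X := fun r x y => eIIS r y ≤ eIIS r x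

/-- The index of the equivalence class a coalition belongs to. -/
def classIdx [DecidableEq X] (r : CoalRanking X) (S : Finset X) : ℕ :=
  r.classes.findIdx (fun C => decide (S ∈ C))

/-- `C_{xy}`: the number of CP comparisons in favour of `x` against `y`. -/
def cpCount [DecidableEq X] [Fintype X] (r : CoalRanking X) (x y : X) : ℕ :=
  ((Finset.univ : Finset (Finset X)).filter (fun S =>
    S.Nonempty ∧ x ∉ S ∧ y ∉ S ∧ insert x S ∈ r.domain ∧ insert y S ∈ r.domain ∧
    classIdx r (insert x S) < classIdx r (insert y S))).card

/-- The Ceteris Paribus majority solution `R^{CPM}`. -/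
def cpm [DecidableEq X] [Fintype X] : SRSMap X := fun r x y =>
  cpCount r y x ≤ cpCount r x y

/-- Neutrality (NT). -/
def NT [DecidableEq X] (R : SRSMap X) : Prop :=
  ∀ (σ : Equiv.Perm X) (r : CoalRanking X) (x y : X),
    R (r.mapPerm σ) (σ x) (σ y) ↔ R r x y

/-- Weak coalitional anonymity (WCA). -/
def WCA [DecidableEq X] (R : SRSMap X) : Prop :=
  ∀ (x y : X) (π : Equiv.Perm (Finset X))
    (hπ : ∀ S : Finset X, S.Nonempty → (π S).Nonempty),
    (∀ S : Finset X, x ∈ S → x ∈ π S) → (∀ S : Finset X, y ∈ S → y ∈ π S) →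
    ∀ r : CoalRanking X,
      (R (r.mapCoalPerm π hπ) x y ↔ R r x y) ∧ (R (r.mapCoalPerm π hπ) y x ↔ R r y x)

/-- The weak union very important person property (WUVIP). -/
def WUVIP (R : SRSMap X) : Prop :=
  ∀ (r : CoalRanking X) (A B : Finset (Finset X)), r.classes = [A, B] →
    ∀ x y : X, (∃ S ∈ A, x ∈ S) → (∀ S ∈ A, y ∉ S) → Pref R r x y

/-- All indifference all winners (AIAW). -/
def AIAW [DecidableEq X] (R : SRSMap X) : Prop :=
  ∀ r : CoalRanking X, r.classes.length ≤ 1 →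
    (∀ x y : X, (∃ S ∈ r.domain, x ∈ S) → (∃ S ∈ r.domain, y ∈ S) → Ind R r x y) ∧
    (∀ x z : X, (∃ S ∈ r.domain, x ∈ S) → (∀ S ∈ r.domain, z ∉ S) → Pref R r x z)

/-- Independence of the decomposition of the worst sets (IDWS). -/
def IDWS [DecidableEq X] (R : SRSMap X) : Prop :=
  ∀ (r r' : CoalRanking X) (L G : List (Finset (Finset X))) (W : Finset (Finset X)),
    L ≠ [] → r.classes = L ++ [W] → r'.classes = L ++ G →
    G.foldr (· ∪ ·) ∅ = W →
    ∀ x y : X, Pref R r x y → Pref R r' x y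

/-- Independence of the addition of the worst sets (IAWS). -/
def IAWS [DecidableEq X] (R : SRSMap X) : Prop :=
  ∀ (r r' : CoalRanking X) (G : Finset (Finset X)),
    r'.classes = r.classes ++ [G] → (∀ S ∈ G, S ∉ r.domain) →
    ∀ x y : X, Pref R r x y → Pref R r' x y

/-- Tops-only (TO). -/
def TO (R : SRSMap X) : Prop :=
  ∀ (r r' : CoalRanking X) (A : Finset (Finset X)),
    r.classes.head? = some A → r'.classes.head? = some A → R r = R r'

/-- The dual S lex-cel `R^{DSL}`. -/
def dslexcel [DecidableEq X] : SRSMap X := fun r x y =>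
  lexGE ((thetaDot r y).reverse) ((thetaDot r x).reverse)

/-- The inverse dual S lex-cel `R^{IDSL}`. -/
def idslexcel [DecidableEq X] : SRSMap X := fun r x y => dslexcel r y x

/-- The vector `θ̃_≿(x)` used by the S lex-cel with precedence on unanimity. -/
def tildeTheta [DecidableEq X] (r : CoalRanking X) (x : X) : List ℕ :=
  r.classes.map (fun C => if cnt x C = C.card then 2 else if 0 < cnt x C then 1 else 0)

/-- The S lex-cel with a particular precedence on unanimity `R^{SLUN}`. -/
def slun [DecidableEq X] : SRSMap X := fun r x y =>
  lexGE (tildeTheta r x) (tildeTheta r y)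

/-- The S sum score `Σ_k sign(x_k)`. -/
def ssum [DecidableEq X] (r : CoalRanking X) (x : X) : ℕ := (thetaDot r x).sum

/-- The S sum rule with tie-breaking by S lex-cel `R^{SSUM,SL}`. -/
def ssumSL [DecidableEq X] : SRSMap X := fun r x y =>
  ssum r y < ssum r x ∨ (ssum r x = ssum r y ∧ slexcel r x y)

end SocRank

open SocRank

/-!
For the plurality solution each axiom reduces to a property of the counts `cnt x A` in the top
class `A`. Conversely, by tops-only `R` only sees the top class `A`, so it suffices to study the
single-class ranking `[A]`. If `x` and `y` lie in equally many coalitions of `A`, some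
`{x, y}`-invariant permutation of coalitions maps `A` onto its image under the transposition
`(x y)`, so WCA and NT force indifference. If `x` lies in more, split off `cnt x A - cnt y A`
coalitions containing `x` but not `y`: on them `x` wins by WUVIP (tops-only lets us append a
bottom class), on the rest `x` and `y` tie, and top-aligned consistency combines the two.
-/

section FiberPerm

open Finset

variable {α κ : Type*} [DecidableEq α] [DecidableEq κ]

theorem exists_perm_image_eq_of_card_filter_eq (f : α → κ) (s t : Finset α)
    (h : ∀ k, #(s.filter (f · = k)) = #(t.filter (f · = k))) :
    ∃ π : Equiv.Perm α, (∀ a, f (π a) = f a) ∧ (∀ a, a ∉ s → a ∉ t → π a = a) ∧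
      s.image π = t := by
  induction s using Finset.induction_on generalizing t with
  | empty =>
    have ht : t = ∅ := eq_empty_of_forall_notMem fun b hb => by
      have := h (f b)
      rw [filter_empty, card_empty, eq_comm, card_eq_zero, filter_eq_empty_iff] at this
      exact this hb rfl
    exact ⟨1, fun _ => rfl, fun _ _ _ => rfl, by simp [ht]⟩
  | insert a s ha ih =>
    obtain ⟨b, hbt, hb⟩ : ∃ b ∈ t, f b = f a := by
      have := h (f a)
      rw [filter_insert, if_pos rfl, card_insert_of_notMem (by simp [ha])] at this
      obtain ⟨b, hb⟩ := card_pos.mp (this ▸ Nat.succ_pos _ : 0 < #(t.filter (f · = f a)))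
      exact ⟨b, mem_filter.mp hb⟩
    obtain ⟨π', hπ'f, hπ'fix, hπ'img⟩ := ih (t.erase b) fun k => by
      have := h k
      rw [filter_erase]
      by_cases hk : f a = k
      · rw [filter_insert, if_pos hk, card_insert_of_notMem (by simp [ha])] at this
        rw [card_erase_of_mem (by simp [hbt, hb, hk])]
        omega
      · rw [filter_insert, if_neg hk] at this
        rw [erase_eq_of_notMem (by simp [hb, hk]), this]
    -- `π'` already sends `s` onto `t.erase b`; swapping `π' a` with `b` puts `a` in place.
    set c := π' a
    have hc : c ∉ t.erase b := by
      rw [← hπ'img, mem_image]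
      rintro ⟨w, hw, hwa⟩
      exact ha (π'.injective hwa ▸ hw)
    have hswap : ∀ w, f (Equiv.swap c b w) = f w := by
      intro w
      rcases eq_or_ne w c with rfl | hwc
      · rw [Equiv.swap_apply_left, hb, hπ'f]
      rcases eq_or_ne w b with rfl | hwb
      · rw [Equiv.swap_apply_right, hπ'f, hb]
      · rw [Equiv.swap_apply_of_ne_of_ne hwc hwb]
    refine ⟨π'.trans (Equiv.swap c b), fun w => by simp [hswap, hπ'f], ?_, ?_⟩
    · intro z hzs hzt
      have hz : π' z = z :=
        hπ'fix z (fun h => hzs (mem_insert_of_mem h)) (fun h => hzt (mem_of_mem_erase h))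
      have hzc : z ≠ c := fun h => hzs (mem_insert.mpr (Or.inl (π'.injective (hz.trans h))))
      have hzb : z ≠ b := by rintro rfl; exact hzt hbt
      simp [hz, Equiv.swap_apply_of_ne_of_ne hzc hzb]
    · have hfix : ∀ w ∈ t.erase b, Equiv.swap c b w = w := fun w hw =>
        Equiv.swap_apply_of_ne_of_ne (by rintro rfl; exact hc hw) (ne_of_mem_erase hw)
      rw [image_insert, Equiv.coe_trans, ← image_image, hπ'img, image_congr hfix, image_id',
        Function.comp_apply, Equiv.swap_apply_left, insert_erase hbt]

end FiberPerm

namespace SocRank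

open Finset

variable {X : Type*}

namespace CoalRanking

theorem classes_injective : Function.Injective (classes (X := X)) := by
  rintro ⟨_, _, _, _⟩ ⟨_, _, _, _⟩ rfl
  rfl

def single (A : Finset (Finset X)) (hA : A.Nonempty) (hA' : ∀ S ∈ A, S.Nonempty) :
    CoalRanking X :=
  ⟨[A], by simpa using hA, by simpa using hA', List.pairwise_singleton _ _⟩

/-- The top equivalence class, `∅` for the empty ranking. -/
def top (r : CoalRanking X) : Finset (Finset X) := r.classes.headD ∅

theorem top_of_classes_eq_cons {r : CoalRanking X} {A : Finset (Finset X)}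
    {L : List (Finset (Finset X))} (h : r.classes = A :: L) : r.top = A := by
  rw [top, h, List.headD_cons]

theorem top_of_head?_eq_some {r : CoalRanking X} {A : Finset (Finset X)}
    (h : r.classes.head? = some A) : r.top = A := by
  rw [top, List.headD_eq_head?_getD, h, Option.getD_some]

end CoalRanking

open CoalRanking

theorem ind_of_iff {R : SRSMap X} (hcomp : ∀ r x y, R r x y ∨ R r y x) {r : CoalRanking X}
    {x y : X} (h : R r x y ↔ R r y x) : Ind R r x y :=
  (hcomp r x y).elim (fun hxy => ⟨hxy, h.mp hxy⟩) (fun hyx => ⟨h.mpr hyx, hyx⟩)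

theorem pref_single_of_forall_notMem {R : SRSMap X} (hWUVIP : WUVIP R) (hTO : TO R)
    {A : Finset (Finset X)} (hA hA') {x y : X} (hx : ∃ S ∈ A, x ∈ S) (hy : ∀ S ∈ A, y ∉ S) :
    Pref R (single A hA hA') x y := by
  -- by tops-only, any class may be placed below `A`; `{{y}}` makes WUVIP applicable
  let r : CoalRanking X :=
    ⟨[A, {{y}}], by simp [hA], by simpa using hA',
      by simpa using fun h => hy {y} h (mem_singleton_self y)⟩
  rw [Pref, hTO _ r A rfl rfl]
  exact hWUVIP r A {{y}} rfl x y hx hy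

variable [DecidableEq X]

section Counting

theorem cnt_empty (z : X) : cnt z ∅ = 0 := rfl

theorem cnt_union (z : X) {A B : Finset (Finset X)} (h : Disjoint A B) :
    cnt z (A ∪ B) = cnt z A + cnt z B := by
  rw [cnt, filter_union, card_union_of_disjoint (disjoint_filter_filter h), cnt, cnt]

theorem cnt_image {f : Finset X → Finset X} (hf : Function.Injective f) {z z' : X}
    (hz : ∀ S, z' ∈ f S ↔ z ∈ S) (A : Finset (Finset X)) : cnt z' (A.image f) = cnt z A := by
  rw [cnt, filter_image, card_image_of_injective _ hf, cnt]
  simp only [hz]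

theorem cnt_pos_iff {z : X} {A : Finset (Finset X)} : 0 < cnt z A ↔ ∃ S ∈ A, z ∈ S := by
  simp [cnt, card_pos, Finset.Nonempty]

theorem cnt_eq_zero_iff {z : X} {A : Finset (Finset X)} : cnt z A = 0 ↔ ∀ S ∈ A, z ∉ S := by
  simp [cnt]

theorem cnt_eq_card_filter_mem_add_card_filter_notMem (x y : X) (A : Finset (Finset X)) :
    cnt x A = #(A.filter fun S => x ∈ S ∧ y ∈ S) + #(A.filter fun S => x ∈ S ∧ y ∉ S) := by
  rw [cnt, ← card_filter_add_card_filter_not (s := A.filter (x ∈ ·)) (y ∈ ·), filter_filter,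
    filter_filter]

end Counting

namespace CoalRanking

@[simp] theorem domain_single (A : Finset (Finset X)) (hA hA') : (single A hA hA').domain = A := by
  simp [domain, single]

theorem top_mapPerm (σ : Equiv.Perm X) (r : CoalRanking X) :
    (r.mapPerm σ).top = r.top.image (fun S => S.image σ) := by
  rw [top, mapPerm, ← image_empty (fun S : Finset X => S.image σ), List.headD_map, top]

theorem top_mapCoalPerm (π : Equiv.Perm (Finset X)) (hπ) (r : CoalRanking X) :
    (r.mapCoalPerm π hπ).top = r.top.image π := by
  rw [top, mapCoalPerm, ← image_empty π, List.headD_map, top]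

theorem top_subset_domain (r : CoalRanking X) : r.top ⊆ r.domain := by
  rcases h : r.classes with _ | ⟨A, L⟩
  · simp [top, h]
  · simp [top, domain, h]

theorem IsTopAlignedSum.top_eq {r r₁ r₂ : CoalRanking X} (h : IsTopAlignedSum r r₁ r₂) :
    r.top = r₁.top ∪ r₂.top := by
  rw [top, top, top, h.2]
  rcases r₁.classes with _ | ⟨A, L⟩ <;> rcases r₂.classes with _ | ⟨B, M⟩ <;> simp [zipUnion]

theorem isTopAlignedSum_single {A₁ A₂ A : Finset (Finset X)} (hd : Disjoint A₁ A₂)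
    (hA : A₁ ∪ A₂ = A) (h₁ h₁' h₂ h₂' h h') :
    IsTopAlignedSum (single A h h') (single A₁ h₁ h₁') (single A₂ h₂ h₂') := by
  subst hA
  exact ⟨by simpa using hd, rfl⟩

end CoalRanking

theorem headD_theta (r : CoalRanking X) (z : X) : (theta r z).headD 0 = cnt z r.top := by
  rw [theta, ← cnt_empty z, List.headD_map, top]

theorem plurality_iff {r : CoalRanking X} {x y : X} :
    plurality r x y ↔ cnt y r.top ≤ cnt x r.top := by
  rw [plurality, headD_theta, headD_theta]

theorem plurality_NT : NT (plurality (X := X)) := by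
  intro σ r x y
  have hσ : ∀ (z : X) (S : Finset X), σ z ∈ S.image σ ↔ z ∈ S := by simp
  rw [plurality_iff, plurality_iff, top_mapPerm, cnt_image (image_injective σ.injective) (hσ x),
    cnt_image (image_injective σ.injective) (hσ y)]

theorem plurality_WCA [Fintype X] : WCA (plurality (X := X)) := by
  intro x y π hπ hx hy r
  -- finiteness turns "`π` keeps every coalition containing `z`" into "`π` permutes them"
  have hcnt : ∀ z, (∀ S, z ∈ S → z ∈ π S) → cnt z (r.mapCoalPerm π hπ).top = cnt z r.top := by
    intro z hz
    rw [top_mapCoalPerm, cnt_image π.injective fun S =>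
      ⟨fun h => by simpa using Equiv.Perm.perm_symm_on_of_perm_on_finite hz h, hz S⟩]
  simp only [plurality_iff, hcnt x hx, hcnt y hy, and_self]

theorem plurality_WUVIP : WUVIP (plurality (X := X)) := by
  intro r A B h x y hx hy
  have hx' := cnt_pos_iff.mpr hx
  have hy' := cnt_eq_zero_iff.mpr hy
  rw [Pref, plurality_iff, plurality_iff, top_of_classes_eq_cons h]
  omega

theorem plurality_TCON : TCON (plurality (X := X)) := by
  intro r₁ r₂ r h x y
  have hcnt : ∀ z, cnt z r.top = cnt z r₁.top + cnt z r₂.top := fun z => by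
    rw [h.top_eq, cnt_union z (h.1.mono (top_subset_domain r₁) (top_subset_domain r₂))]
  simp only [Ind, Pref, plurality_iff, hcnt]
  omega

theorem plurality_TO : TO (plurality (X := X)) := by
  intro r r' A h h'
  funext x y
  rw [plurality_iff, plurality_iff, top_of_head?_eq_some h, top_of_head?_eq_some h']

theorem exists_perm_image_eq_image_swap {x y : X} {A : Finset (Finset X)}
    (hA : ∀ S ∈ A, S.Nonempty) (hcnt : cnt x A = cnt y A) :
    ∃ π : Equiv.Perm (Finset X), (∀ S, S.Nonempty → (π S).Nonempty) ∧
      (∀ S, x ∈ S → x ∈ π S) ∧ (∀ S, y ∈ S → y ∈ π S) ∧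
      A.image π = A.image (fun S => S.image (Equiv.swap x y)) := by
  set ι : Finset X → Finset X := fun S => S.image (Equiv.swap x y)
  let f : Finset X → Bool × Bool := fun S => (decide (x ∈ S), decide (y ∈ S))
  have hfι : ∀ S, f (ι S) = (f S).swap := fun S => by
    simp [f, ι, Equiv.swap_apply_eq_iff]
  have hfswap : ∀ k, #(A.filter (f · = k.swap)) = #(A.filter (f · = k)) := by
    have hx := cnt_eq_card_filter_mem_add_card_filter_notMem x y A
    have hy := cnt_eq_card_filter_mem_add_card_filter_notMem y x A
    simp only [and_comm (a := y ∈ _)] at hy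
    rintro ⟨_ | _, _ | _⟩ <;> simp [f] <;> omega
  obtain ⟨π, hπf, hπfix, hπimg⟩ := exists_perm_image_eq_of_card_filter_eq f A (A.image ι)
    fun k => by
      rw [filter_image, card_image_of_injective _ (image_injective (Equiv.swap x y).injective),
        ← hfswap]
      simp only [hfι, Prod.swap_eq_iff_eq_swap]
  have hA_empty : ∅ ∉ A := fun h => (hA ∅ h).ne_empty rfl
  have hπ_empty : π ∅ = ∅ := hπfix ∅ hA_empty (by simpa [ι] using hA_empty)
  refine ⟨π, fun S hS => ?_, fun S hS => ?_, fun S hS => ?_, hπimg⟩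
  · rw [nonempty_iff_ne_empty, ← hπ_empty, π.injective.ne_iff]
    exact hS.ne_empty
  · simpa [f, hS] using congrArg Prod.fst (hπf S)
  · simpa [f, hS] using congrArg Prod.snd (hπf S)

section Axioms

variable {R : SRSMap X}

theorem apply_mapPerm_swap_iff (hNT : NT R) (r : CoalRanking X) (x y : X) :
    R (r.mapPerm (Equiv.swap x y)) x y ↔ R r y x := by
  simpa using hNT (Equiv.swap x y) r y x

theorem ind_of_classes_eq_nil (hNT : NT R) (hcomp : ∀ r x y, R r x y ∨ R r y x)
    {r : CoalRanking X} (hr : r.classes = []) (x y : X) : Ind R r x y := by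
  have hswap : r.mapPerm (Equiv.swap x y) = r := classes_injective (by simp [mapPerm, hr])
  have h := apply_mapPerm_swap_iff hNT r x y
  rw [hswap] at h
  exact ind_of_iff hcomp h

theorem ind_single_of_cnt_eq (hNT : NT R) (hWCA : WCA R) (hcomp : ∀ r x y, R r x y ∨ R r y x)
    {A : Finset (Finset X)} (hA hA') {x y : X} (hcnt : cnt x A = cnt y A) :
    Ind R (single A hA hA') x y := by
  obtain ⟨π, hπ, hx, hy, himg⟩ := exists_perm_image_eq_image_swap hA' hcnt
  have hr : (single A hA hA').mapCoalPerm π hπ = (single A hA hA').mapPerm (Equiv.swap x y) :=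
    classes_injective (by simp [mapCoalPerm, mapPerm, single, himg])
  apply ind_of_iff hcomp
  rw [← (hWCA x y π hπ hx hy _).1, hr, apply_mapPerm_swap_iff hNT]

theorem pref_single_of_cnt_lt (hNT : NT R) (hWCA : WCA R) (hWUVIP : WUVIP R) (hTCON : TCON R)
    (hTO : TO R) (hcomp : ∀ r x y, R r x y ∨ R r y x) {A : Finset (Finset X)} (hA hA')
    {x y : X} (h : cnt y A < cnt x A) : Pref R (single A hA hA') x y := by
  have hx := cnt_eq_card_filter_mem_add_card_filter_notMem x y A
  have hy := cnt_eq_card_filter_mem_add_card_filter_notMem y x A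
  simp only [and_comm (a := y ∈ _)] at hy
  obtain ⟨A₁, hA₁sub, hA₁card⟩ := exists_subset_card_eq
    (show cnt x A - cnt y A ≤ #(A.filter fun S => x ∈ S ∧ y ∉ S) by omega)
  have hA₁A : A₁ ⊆ A := hA₁sub.trans (filter_subset _ _)
  have hmem : ∀ S ∈ A₁, x ∈ S ∧ y ∉ S := fun S hS => (mem_filter.mp (hA₁sub hS)).2
  have hA₁ : A₁.Nonempty := card_pos.mp (by omega)
  have hA₁' : ∀ S ∈ A₁, S.Nonempty := fun S hS => hA' S (hA₁A hS)
  have hpref : Pref R (single A₁ hA₁ hA₁') x y :=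
    pref_single_of_forall_notMem hWUVIP hTO hA₁ hA₁'
      (hA₁.imp fun S hS => ⟨hS, (hmem S hS).1⟩) fun S hS => (hmem S hS).2
  by_cases hA₂ : (A \ A₁).Nonempty
  · have hunion : A₁ ∪ A \ A₁ = A := union_sdiff_of_subset hA₁A
    have hcnt₁x : cnt x A₁ = #A₁ := by rw [cnt, filter_true_of_mem fun S hS => (hmem S hS).1]
    have hcnt₁y : cnt y A₁ = 0 := cnt_eq_zero_iff.mpr fun S hS => (hmem S hS).2
    have hcx := cnt_union x (disjoint_sdiff (s := A₁) (t := A))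
    have hcy := cnt_union y (disjoint_sdiff (s := A₁) (t := A))
    rw [hunion] at hcx hcy
    have hind : Ind R (single (A \ A₁) hA₂ fun S hS => hA' S (mem_sdiff.mp hS).1) x y :=
      ind_single_of_cnt_eq hNT hWCA hcomp _ _ (by omega)
    exact (hTCON _ _ _ (isTopAlignedSum_single disjoint_sdiff hunion _ _ _ _ _ _) x y).2.2.1
      hpref hind
  · obtain rfl : A₁ = A :=
      hA₁A.antisymm (sdiff_eq_empty_iff_subset.mp (not_nonempty_iff_eq_empty.mp hA₂))
    exact hpref

theorem apply_single_iff_cnt_le (hNT : NT R) (hWCA : WCA R) (hWUVIP : WUVIP R) (hTCON : TCON R)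
    (hTO : TO R) (hcomp : ∀ r x y, R r x y ∨ R r y x) {A : Finset (Finset X)} (hA hA')
    (x y : X) : R (single A hA hA') x y ↔ cnt y A ≤ cnt x A := by
  rcases lt_trichotomy (cnt x A) (cnt y A) with h | h | h
  · exact iff_of_false (pref_single_of_cnt_lt hNT hWCA hWUVIP hTCON hTO hcomp hA hA' h).2
      h.not_ge
  · exact iff_of_true (ind_single_of_cnt_eq hNT hWCA hcomp hA hA' h).1 h.ge
  · exact iff_of_true (pref_single_of_cnt_lt hNT hWCA hWUVIP hTCON hTO hcomp hA hA' h).1 h.le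

theorem eq_plurality (hNT : NT R) (hWCA : WCA R) (hWUVIP : WUVIP R) (hTCON : TCON R)
    (hTO : TO R) (hcomp : ∀ r x y, R r x y ∨ R r y x) : R = plurality := by
  funext r x y
  apply propext
  rw [plurality_iff]
  rcases hr : r.classes with _ | ⟨A, L⟩
  · rw [top, hr, List.headD_nil, cnt_empty, cnt_empty]
    exact iff_of_true (ind_of_classes_eq_nil hNT hcomp hr x y).1 le_rfl
  · have hA : A ∈ r.classes := hr ▸ List.mem_cons_self
    rw [hTO r (single A (r.class_nonempty A hA) (r.coal_nonempty A hA)) A (by rw [hr]; rfl) rfl,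
      top_of_classes_eq_cons hr]
    exact apply_single_iff_cnt_le hNT hWCA hWUVIP hTCON hTO hcomp _ _ x y

end Axioms

end SocRank

theorem plurality_characterization_general {X : Type*} [DecidableEq X] [Fintype X]
    (R : SRSMap X)
    (hcomp : ∀ (r : CoalRanking X) (x y : X), R r x y ∨ R r y x) :
    (NT R ∧ WCA R ∧ WUVIP R ∧ TCON R ∧ TO R) ↔ R = plurality := by
  refine ⟨fun ⟨hNT, hWCA, hWUVIP, hTCON, hTO⟩ => eq_plurality hNT hWCA hWUVIP hTCON hTO hcomp, ?_⟩
  rintro rfl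
  exact ⟨plurality_NT, plurality_WCA, plurality_WUVIP, plurality_TCON, plurality_TO⟩

/-- an SRS satisfies NT, WCA, WUVIP, TCON and TO iff it is plurality. -/
theorem plurality_characterization {X : Type*} [DecidableEq X] [Fintype X]
    (hX : 3 ≤ Fintype.card X) (R : SRSMap X)
    (hrefl : ∀ (r : CoalRanking X) (x : X), R r x x)
    (hcomp : ∀ (r : CoalRanking X) (x y : X), R r x y ∨ R r y x) :
    (NT R ∧ WCA R ∧ WUVIP R ∧ TCON R ∧ TO R) ↔ R = plurality :=
  plurality_characterization_general R hcomp
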